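/- arXiv:2203.02342 — 7 statements merged into one kernel-verified Lean document; each statement's English description precedes it below -/
import Mathlib

section
/- Let V be the space of square-integrable functions from [0,∞) to ℝⁿ with L² norm ‖·‖₂. Let G, Δ : V → V be maps and γ₁, γ₂, β₁, β₂ ≥ 0 be constants such that ‖G(x)‖₂ ≤ γ₁‖x‖₂ + β₁ and ‖Δ(x)‖₂ ≤ γ₂‖x‖₂ + β₂ for all x ∈ V, and suppose γ₁γ₂ < 1. If v, w, e₁, e₂ ∈ V satisfy the feedback equations v = G(w + e₁) and w = Δ(v + e₂), then ‖v‖₂ ≤ (γ₁‖e₁‖₂ + γ₁γ₂‖e₂‖₂ + γ₁β₂ + β₁)/(1 − γ₁γ₂) and ‖w‖₂ ≤ (γ₁γ₂‖e₁‖₂ + γ₂‖e₂‖₂ + γ₂β₁ + β₂)/(1 − γ₁γ₂). (Small Gain Theorem: the feedback interconnection of two finite-gain L₂-stable operators with loop gain γ₁γ₂ < 1 is internally stable.) -/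
open MeasureTheory

/-!
Each loop equation bounds one signal by the other: `‖v‖ ≤ γ₁ (‖w‖ + ‖e₁‖) + β₁` and
`‖w‖ ≤ γ₂ (‖v‖ + ‖e₂‖) + β₂`. Substituting the second bound into the first gives
`‖v‖ ≤ γ₁ γ₂ ‖v‖ + …`, and since the loop gain `γ₁ γ₂` is below `1` this can be solved for `‖v‖`;
the bound on `‖w‖` is the same computation with the two loop elements exchanged.
-/

section SmallGain

variable {E F : Type*} [SeminormedAddGroup E] [SeminormedAddGroup F]

def FiniteGainStable (φ : E → F) (γ β : ℝ) : Prop :=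
  ∀ x, ‖φ x‖ ≤ γ * ‖x‖ + β

theorem FiniteGainStable.norm_apply_add_le {φ : E → F} {γ β : ℝ} (hφ : FiniteGainStable φ γ β)
    (hγ : 0 ≤ γ) (x e : E) : ‖φ (x + e)‖ ≤ γ * (‖x‖ + ‖e‖) + β :=
  calc ‖φ (x + e)‖ ≤ γ * ‖x + e‖ + β := hφ _
    _ ≤ γ * (‖x‖ + ‖e‖) + β := by gcongr; exact norm_add_le x e

theorem le_div_one_sub_mul_of_loop {γ₁ γ₂ β₁ β₂ a b p q : ℝ} (hγ₁ : 0 ≤ γ₁)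
    (hloop : γ₁ * γ₂ < 1) (ha : a ≤ γ₁ * (b + p) + β₁) (hb : b ≤ γ₂ * (a + q) + β₂) :
    a ≤ (γ₁ * p + γ₁ * γ₂ * q + γ₁ * β₂ + β₁) / (1 - γ₁ * γ₂) := by
  rw [le_div_iff₀ (by linarith)]
  nlinarith [mul_le_mul_of_nonneg_left hb hγ₁]

theorem FiniteGainStable.small_gain {G Δ : E → E} {γ₁ γ₂ β₁ β₂ : ℝ}
    (hG : FiniteGainStable G γ₁ β₁) (hΔ : FiniteGainStable Δ γ₂ β₂)
    (hγ₁ : 0 ≤ γ₁) (hγ₂ : 0 ≤ γ₂) (hloop : γ₁ * γ₂ < 1) {v w e₁ e₂ : E}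
    (hv : v = G (w + e₁)) (hw : w = Δ (v + e₂)) :
    ‖v‖ ≤ (γ₁ * ‖e₁‖ + γ₁ * γ₂ * ‖e₂‖ + γ₁ * β₂ + β₁) / (1 - γ₁ * γ₂) ∧
    ‖w‖ ≤ (γ₁ * γ₂ * ‖e₁‖ + γ₂ * ‖e₂‖ + γ₂ * β₁ + β₂) / (1 - γ₁ * γ₂) := by
  have hv' : ‖v‖ ≤ γ₁ * (‖w‖ + ‖e₁‖) + β₁ := hv ▸ hG.norm_apply_add_le hγ₁ w e₁
  have hw' : ‖w‖ ≤ γ₂ * (‖v‖ + ‖e₂‖) + β₂ := hw ▸ hΔ.norm_apply_add_le hγ₂ v e₂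
  refine ⟨le_div_one_sub_mul_of_loop hγ₁ hloop hv' hw', ?_⟩
  rw [mul_comm γ₁ γ₂] at hloop ⊢
  exact (le_div_one_sub_mul_of_loop hγ₂ hloop hw' hv').trans_eq (by ring)

end SmallGain

theorem small_gain_theorem_general (n : ℕ)
    (G Δ : Lp (α := ℝ) (EuclideanSpace ℝ (Fin n)) 2 (volume.restrict (Set.Ici (0 : ℝ))) →
      Lp (α := ℝ) (EuclideanSpace ℝ (Fin n)) 2 (volume.restrict (Set.Ici (0 : ℝ))))
    (γ₁ γ₂ β₁ β₂ : ℝ) (hγ₁ : 0 ≤ γ₁) (hγ₂ : 0 ≤ γ₂)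
    (hG : ∀ x, ‖G x‖ ≤ γ₁ * ‖x‖ + β₁)
    (hΔ : ∀ x, ‖Δ x‖ ≤ γ₂ * ‖x‖ + β₂)
    (hloop : γ₁ * γ₂ < 1)
    (v w e₁ e₂ : Lp (α := ℝ) (EuclideanSpace ℝ (Fin n)) 2 (volume.restrict (Set.Ici (0 : ℝ))))
    (hv : v = G (w + e₁)) (hw : w = Δ (v + e₂)) :
    ‖v‖ ≤ (γ₁ * ‖e₁‖ + γ₁ * γ₂ * ‖e₂‖ + γ₁ * β₂ + β₁) / (1 - γ₁ * γ₂) ∧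
    ‖w‖ ≤ (γ₁ * γ₂ * ‖e₁‖ + γ₂ * ‖e₂‖ + γ₂ * β₁ + β₂) / (1 - γ₁ * γ₂) :=
  FiniteGainStable.small_gain hG hΔ hγ₁ hγ₂ hloop hv hw

/-- **Small Gain Theorem** for finite-gain `L²`-stable operators on the space
`V = L²([0,∞), ℝⁿ)` of square-integrable functions on `[0,∞)`. -/
theorem small_gain_theorem (n : ℕ)
    (G Δ : Lp (α := ℝ) (EuclideanSpace ℝ (Fin n)) 2 (volume.restrict (Set.Ici (0 : ℝ))) →
      Lp (α := ℝ) (EuclideanSpace ℝ (Fin n)) 2 (volume.restrict (Set.Ici (0 : ℝ))))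
    (γ₁ γ₂ β₁ β₂ : ℝ) (hγ₁ : 0 ≤ γ₁) (hγ₂ : 0 ≤ γ₂) (hβ₁ : 0 ≤ β₁) (hβ₂ : 0 ≤ β₂)
    (hG : ∀ x, ‖G x‖ ≤ γ₁ * ‖x‖ + β₁)
    (hΔ : ∀ x, ‖Δ x‖ ≤ γ₂ * ‖x‖ + β₂)
    (hloop : γ₁ * γ₂ < 1)
    (v w e₁ e₂ : Lp (α := ℝ) (EuclideanSpace ℝ (Fin n)) 2 (volume.restrict (Set.Ici (0 : ℝ))))
    (hv : v = G (w + e₁)) (hw : w = Δ (v + e₂)) :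
    ‖v‖ ≤ (γ₁ * ‖e₁‖ + γ₁ * γ₂ * ‖e₂‖ + γ₁ * β₂ + β₁) / (1 - γ₁ * γ₂) ∧
    ‖w‖ ≤ (γ₁ * γ₂ * ‖e₁‖ + γ₂ * ‖e₂‖ + γ₂ * β₁ + β₂) / (1 - γ₁ * γ₂) :=
  small_gain_theorem_general n G Δ γ₁ γ₂ β₁ β₂ hγ₁ hγ₂ hG hΔ hloop v w e₁ e₂ hv hw
end

section
/- Let Π₁ be a p×p Hermitian positive definite complex matrix, Π₃ a q×q Hermitian negative definite complex matrix, and Π₂ an arbitrary p×q complex matrix. Then there exists an invertible (p+q)×(p+q) complex matrix C such that fromBlocks Π₁ Π₂ Π₂* Π₃ = C* ⬝ (fromBlocks I 0 0 (−I)) ⬝ C, i.e., the Hermitian block matrix [[Π₁, Π₂],[Π₂*, Π₃]] is congruent to diag(I, −I). -/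
open Matrix
open scoped ComplexOrder

/-- A Hermitian block matrix `[[Π₁, Π₂], [Π₂*, Π₃]]` with `Π₁ ≻ 0` (Hermitian positive
definite) and `Π₃ ≺ 0` (Hermitian negative definite) is congruent to `diag(I, -I)`:
there is an invertible matrix `C` with
`fromBlocks Π₁ Π₂ Π₂ᴴ Π₃ = Cᴴ * fromBlocks I 0 0 (-I) * C`. -/
theorem hermitian_block_congruent_to_diag_one_neg_one (p q : ℕ)
    (Pi₁ : Matrix (Fin p) (Fin p) ℂ) (Pi₂ : Matrix (Fin p) (Fin q) ℂ)
    (Pi₃ : Matrix (Fin q) (Fin q) ℂ)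
    (hPi₁ : Pi₁.PosDef) (hPi₃ : (-Pi₃).PosDef) :
    ∃ C : Matrix (Fin p ⊕ Fin q) (Fin p ⊕ Fin q) ℂ, IsUnit C ∧
      fromBlocks Pi₁ Pi₂ Pi₂ᴴ Pi₃ =
        Cᴴ * fromBlocks (1 : Matrix (Fin p) (Fin p) ℂ) 0 0
          (-(1 : Matrix (Fin q) (Fin q) ℂ)) * C := by
  haveI := hPi₁.isUnit.invertible
  have hinv : ⅟Pi₁ = Pi₁⁻¹ := invOf_eq_nonsing_inv Pi₁
  set S : Matrix (Fin q) (Fin q) ℂ := Pi₃ - Pi₂ᴴ * ⅟Pi₁ * Pi₂ with hS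
  have hSneg : (-S).PosDef := by
    have h1 : (Pi₂ᴴ * Pi₁⁻¹ * Pi₂).PosSemidef :=
      (hPi₁.inv.posSemidef).conjTranspose_mul_mul_same Pi₂
    have hrw : -S = -Pi₃ + Pi₂ᴴ * Pi₁⁻¹ * Pi₂ := by
      rw [hS, hinv]; abel
    rw [hrw]
    exact hPi₃.add_posSemidef h1
  -- square roots
  set A : Matrix (Fin p) (Fin p) ℂ := (open scoped MatrixOrder in CFC.sqrt Pi₁) with hAdef
  set B : Matrix (Fin q) (Fin q) ℂ := (open scoped MatrixOrder in CFC.sqrt (-S)) with hBdef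
  have hAH : Aᴴ = A := (open scoped MatrixOrder in (CFC.sqrt_nonneg Pi₁).posSemidef.isHermitian)
  have hBH : Bᴴ = B := (open scoped MatrixOrder in (CFC.sqrt_nonneg (-S)).posSemidef.isHermitian)
  have hAA : A * A = Pi₁ := (open scoped MatrixOrder in CFC.sqrt_mul_sqrt_self Pi₁ hPi₁.posSemidef.nonneg)
  have hBB : B * B = -S := (open scoped MatrixOrder in CFC.sqrt_mul_sqrt_self (-S) hSneg.posSemidef.nonneg)
  have hAunit : IsUnit A := by
    rw [Matrix.isUnit_iff_isUnit_det]
    have : IsUnit (A.det * A.det) := by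
      rw [← Matrix.det_mul, hAA, ← Matrix.isUnit_iff_isUnit_det]
      exact hPi₁.isUnit
    exact isUnit_of_mul_isUnit_left this
  have hBunit : IsUnit B := by
    rw [Matrix.isUnit_iff_isUnit_det]
    have : IsUnit (B.det * B.det) := by
      rw [← Matrix.det_mul, hBB, ← Matrix.isUnit_iff_isUnit_det]
      exact hSneg.isUnit
    exact isUnit_of_mul_isUnit_left this
  refine ⟨fromBlocks A 0 0 B * fromBlocks 1 (⅟Pi₁ * Pi₂) 0 1, ?_, ?_⟩
  · haveI : Invertible (1 : Matrix (Fin p) (Fin p) ℂ) := invertibleOne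
    haveI : Invertible (1 : Matrix (Fin q) (Fin q) ℂ) := invertibleOne
    haveI := Matrix.fromBlocksZero₂₁Invertible (1 : Matrix (Fin p) (Fin p) ℂ)
      (⅟Pi₁ * Pi₂) (1 : Matrix (Fin q) (Fin q) ℂ)
    refine IsUnit.mul ?_ (isUnit_of_invertible _)
    rw [Matrix.isUnit_iff_isUnit_det, Matrix.det_fromBlocks_zero₂₁]
    exact (hAunit.map (Matrix.detMonoidHom)).mul (hBunit.map (Matrix.detMonoidHom))
  · rw [Matrix.fromBlocks_eq_of_invertible₁₁ Pi₁ Pi₂ Pi₂ᴴ Pi₃]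
    have hmid : fromBlocks Pi₁ 0 0 (Pi₃ - Pi₂ᴴ * ⅟Pi₁ * Pi₂) =
        (fromBlocks A 0 0 B)ᴴ *
          fromBlocks (1 : Matrix (Fin p) (Fin p) ℂ) 0 0
            (-(1 : Matrix (Fin q) (Fin q) ℂ)) * fromBlocks A 0 0 B := by
      rw [fromBlocks_conjTranspose, hAH, hBH]
      simp only [conjTranspose_zero, fromBlocks_multiply, Matrix.mul_zero, Matrix.zero_mul,
        Matrix.mul_one, Matrix.one_mul, add_zero, zero_add, Matrix.mul_neg, Matrix.neg_mul,
        Matrix.zero_mul, Matrix.mul_zero]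
      rw [hBB]
      simp [hS, hAA]
    have hconj : (fromBlocks A 0 0 B * fromBlocks 1 (⅟Pi₁ * Pi₂) 0 1)ᴴ =
        fromBlocks 1 0 (Pi₂ᴴ * ⅟Pi₁) 1 * (fromBlocks A 0 0 B)ᴴ := by
      rw [conjTranspose_mul]
      congr 1
      rw [fromBlocks_conjTranspose]
      simp only [conjTranspose_one, conjTranspose_zero]
      congr 1
      rw [conjTranspose_mul, hinv, hPi₁.inv.isHermitian]
    rw [hconj, hmid]
    noncomm_ring
end

section
/- Let A, B, C, A_Δ, B_Δ, C_Δ, A_k, B_k, C_k, D_k be real matrices of compatible dimensions. On an open interval between two consecutive triggering instants, suppose ŷ and û are constant, and x_p, x_k, ξ are differentiable functions satisfying ẋ_p = A x_p + B û, y = C x_p + d, ξ̇ = A_Δ ξ + B_Δ û, d = C_Δ ξ, ẋ_k = A_k x_k + B_k ŷ, u = C_k x_k + D_k ŷ, with ŷ = y + ε_y and û = u + ε_u. Then on this interval the sampling error ε = (ε_y, ε_u) satisfies ε̇ = Â ε + B̂ ζ with ζ = (x_p, x_k, ξ), where Â = [[−C B D_k − C_Δ B_Δ D_k, −C B − C_Δ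 B_Δ],[−C_k B_k, 0]] and B̂ = [[−C A − C B D_k C − C_Δ B_Δ D_k C, −C B C_k − C_Δ B_Δ C_k, −C B D_k C_Δ − C_Δ B_Δ D_k C_Δ − C_Δ A_Δ],[−C_k B_k C, −C_k A_k, −C_k B_k C_Δ]]. -/
open Matrix

/-!
Since `ŷ` is constant on the interval, `ε_y = ŷ - C x_p - C_Δ ξ` and `ε_u = û - C_k x_k - D_k ŷ`
have derivatives `-(C ẋ_p + C_Δ ξ̇)` and `-C_k ẋ_k`. Substituting `ŷ = ε_y + y` and
`û = ε_u + u` into the plant, uncertainty and controller dynamics turns these into `Â ε + B̂ ζ`.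
-/

theorem HasDerivAt.mulVec {𝕜 m n : Type*} [NontriviallyNormedField 𝕜] [Fintype m] [Fintype n]
    (M : Matrix m n 𝕜) {x : 𝕜 → n → 𝕜} {x' : n → 𝕜} {t : 𝕜} (hx : HasDerivAt x x' t) :
    HasDerivAt (fun s => M *ᵥ x s) (M *ᵥ x') t :=
  hasDerivAt_pi.2 fun i => by
    simp only [Matrix.mulVec, dotProduct]
    exact HasDerivAt.fun_sum fun j _ => (hasDerivAt_pi.1 hx j).const_mul (M i j)

theorem HasDerivAt.sumElim {𝕜 m n : Type*} [NontriviallyNormedField 𝕜] [Fintype m] [Fintype n]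
    {f : 𝕜 → m → 𝕜} {g : 𝕜 → n → 𝕜} {f' : m → 𝕜} {g' : n → 𝕜} {t : 𝕜}
    (hf : HasDerivAt f f' t) (hg : HasDerivAt g g' t) :
    HasDerivAt (fun s => Sum.elim (f s) (g s)) (Sum.elim f' g') t :=
  hasDerivAt_pi.2 fun
    | .inl i => hasDerivAt_pi.1 hf i
    | .inr j => hasDerivAt_pi.1 hg j

theorem samplingError_rate_eq {np nk nd p q : Type*} [Fintype np] [Fintype nk] [Fintype nd]
    [Fintype p] [Fintype q]
    (A : Matrix np np ℝ) (B : Matrix np q ℝ) (C : Matrix p np ℝ)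
    (AΔ : Matrix nd nd ℝ) (BΔ : Matrix nd q ℝ) (CΔ : Matrix p nd ℝ)
    (Ak : Matrix nk nk ℝ) (Bk : Matrix nk p ℝ) (Ck : Matrix q nk ℝ) (Dk : Matrix q p ℝ)
    (xp : np → ℝ) (xk : nk → ℝ) (ξ : nd → ℝ) (yhat εy : p → ℝ) (uhat εu : q → ℝ)
    (hyhat : yhat = εy + (C *ᵥ xp + CΔ *ᵥ ξ)) (huhat : uhat = εu + (Ck *ᵥ xk + Dk *ᵥ yhat)) :
    Sum.elim (-(C *ᵥ (A *ᵥ xp + B *ᵥ uhat) + CΔ *ᵥ (AΔ *ᵥ ξ + BΔ *ᵥ uhat)))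
        (-(Ck *ᵥ (Ak *ᵥ xk + Bk *ᵥ yhat))) =
      fromBlocks (-(C * B * Dk) - CΔ * BΔ * Dk) (-(C * B) - CΔ * BΔ) (-(Ck * Bk)) 0 *ᵥ
          Sum.elim εy εu +
        fromBlocks
          (fromCols (-(C * A) - C * B * Dk * C - CΔ * BΔ * Dk * C)
            (-(C * B * Ck) - CΔ * BΔ * Ck))
          (-(C * B * Dk * CΔ) - CΔ * BΔ * Dk * CΔ - CΔ * AΔ)
          (fromCols (-(Ck * Bk * C)) (-(Ck * Ak)))
          (-(Ck * Bk * CΔ)) *ᵥ Sum.elim (Sum.elim xp xk) ξ := by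
  subst huhat hyhat
  simp only [fromBlocks_mulVec, fromCols_mulVec_sumElim, Sum.elim_comp_inl, Sum.elim_comp_inr,
    mulVec_add, sub_mulVec, neg_mulVec, zero_mulVec, ← mulVec_mulVec, ← Sum.elim_add_add,
    Sum.elim_eq_iff]
  constructor <;> abel

/-- Inter-sample dynamics of the sampling error: between two consecutive triggering
instants (on the open interval `(a, b)` where `ŷ` and `û` are held constant), the
sampling error `ε = (ε_y, ε_u)` satisfies `ε̇ = Â ε + B̂ ζ` with `ζ = (x_p, x_k, ξ)`.
(Here `yhat = ŷ`, `uhat = û`.) -/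
theorem intersample_error_dynamics (n nk nd p q : ℕ)
    (A : Matrix (Fin n) (Fin n) ℝ) (B : Matrix (Fin n) (Fin q) ℝ)
    (C : Matrix (Fin p) (Fin n) ℝ)
    (AΔ : Matrix (Fin nd) (Fin nd) ℝ) (BΔ : Matrix (Fin nd) (Fin q) ℝ)
    (CΔ : Matrix (Fin p) (Fin nd) ℝ)
    (Ak : Matrix (Fin nk) (Fin nk) ℝ) (Bk : Matrix (Fin nk) (Fin p) ℝ)
    (Ck : Matrix (Fin q) (Fin nk) ℝ) (Dk : Matrix (Fin q) (Fin p) ℝ)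
    (a b : ℝ)
    (xp : ℝ → Fin n → ℝ) (xk : ℝ → Fin nk → ℝ) (ξ : ℝ → Fin nd → ℝ)
    (y d yhat εy : ℝ → Fin p → ℝ) (u uhat εu : ℝ → Fin q → ℝ)
    (cy : Fin p → ℝ) (cu : Fin q → ℝ)
    (hyc : ∀ t ∈ Set.Ioo a b, yhat t = cy)
    (huc : ∀ t ∈ Set.Ioo a b, uhat t = cu)
    (hxp : ∀ t ∈ Set.Ioo a b, HasDerivAt xp (A *ᵥ xp t + B *ᵥ uhat t) t)
    (hy : ∀ t ∈ Set.Ioo a b, y t = C *ᵥ xp t + d t)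
    (hξ : ∀ t ∈ Set.Ioo a b, HasDerivAt ξ (AΔ *ᵥ ξ t + BΔ *ᵥ uhat t) t)
    (hd : ∀ t ∈ Set.Ioo a b, d t = CΔ *ᵥ ξ t)
    (hxk : ∀ t ∈ Set.Ioo a b, HasDerivAt xk (Ak *ᵥ xk t + Bk *ᵥ yhat t) t)
    (hu : ∀ t ∈ Set.Ioo a b, u t = Ck *ᵥ xk t + Dk *ᵥ yhat t)
    (hεy : ∀ t ∈ Set.Ioo a b, εy t = yhat t - y t)
    (hεu : ∀ t ∈ Set.Ioo a b, εu t = uhat t - u t)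
    (Ahat : Matrix (Fin p ⊕ Fin q) (Fin p ⊕ Fin q) ℝ)
    (Bhat : Matrix (Fin p ⊕ Fin q) ((Fin n ⊕ Fin nk) ⊕ Fin nd) ℝ)
    (hAhat : Ahat = fromBlocks (-(C * B * Dk) - CΔ * BΔ * Dk) (-(C * B) - CΔ * BΔ)
      (-(Ck * Bk)) 0)
    (hBhat : Bhat = fromBlocks
      (fromCols (-(C * A) - C * B * Dk * C - CΔ * BΔ * Dk * C)
        (-(C * B * Ck) - CΔ * BΔ * Ck))
      (-(C * B * Dk * CΔ) - CΔ * BΔ * Dk * CΔ - CΔ * AΔ)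
      (fromCols (-(Ck * Bk * C)) (-(Ck * Ak)))
      (-(Ck * Bk * CΔ))) :
    ∀ t ∈ Set.Ioo a b,
      HasDerivAt (fun s => Sum.elim (εy s) (εu s))
        (Ahat *ᵥ Sum.elim (εy t) (εu t) +
          Bhat *ᵥ Sum.elim (Sum.elim (xp t) (xk t)) (ξ t)) t := by
  intro t ht
  have near_t : ∀ᶠ s in nhds t, s ∈ Set.Ioo a b := isOpen_Ioo.mem_nhds ht
  have hy' : HasDerivAt y
      (C *ᵥ (A *ᵥ xp t + B *ᵥ uhat t) + CΔ *ᵥ (AΔ *ᵥ ξ t + BΔ *ᵥ uhat t)) t :=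
    (((hxp t ht).mulVec C).fun_add ((hξ t ht).mulVec CΔ)).congr_of_eventuallyEq <|
      near_t.mono fun s hs => by rw [hy s hs, hd s hs]
  have hu' : HasDerivAt u (Ck *ᵥ (Ak *ᵥ xk t + Bk *ᵥ yhat t)) t :=
    (((hxk t ht).mulVec Ck).add_const (Dk *ᵥ cy)).congr_of_eventuallyEq <|
      near_t.mono fun s hs => by rw [hu s hs, hyc s hs]
  have hεy' : HasDerivAt εy _ t := (hy'.const_sub cy).congr_of_eventuallyEq <|
    near_t.mono fun s hs => by rw [hεy s hs, hyc s hs]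
  have hεu' : HasDerivAt εu _ t := (hu'.const_sub cu).congr_of_eventuallyEq <|
    near_t.mono fun s hs => by rw [hεu s hs, huc s hs]
  refine (hεy'.sumElim hεu').congr_deriv ?_
  rw [hAhat, hBhat]
  apply samplingError_rate_eq
  · rw [hεy t ht, hy t ht, hd t ht]; abel
  · rw [hεu t ht, hu t ht]; abel
end

section
/- Let Â be a nonzero m×m real matrix, B̂ a nonzero m×n real matrix, H > 0, μ > 0, ν > 0. Let ζ : ℝ → ℝⁿ be measurable with ‖ζ(t)‖ ≤ H for all t, let 0 ≤ t_K ≤ T₀ ≤ T, and set ε(T₀) = ∫_{t_K}^{T₀} exp(Â(T₀ − τ)) B̂ ζ(τ) dτ. If ‖ε(T₀)‖² ≥ μ e^{−νT}, then T₀ − t_K ≥ 2μ‖Â‖ e^{−(4‖Â‖+ν)T} / (‖B̂‖² H²). (This lower bound on the time needed for the sampling error to reach the triggering level excludes Zeno behavior.) -/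
open Matrix
open scoped Matrix.Norms.L2Operator

/-!
Write `Δ = T₀ − t_K`. Since `‖exp (sÂ)‖ ≤ e^{|s|‖Â‖}` and `‖B̂ ζ(τ)‖ ≤ ‖B̂‖ H`, the integrand
defining `ε(T₀)` is bounded by `e^{‖Â‖Δ} ‖B̂‖ H`, so the triggering condition forces
`μ e^{−νT} ≤ e^{2‖Â‖Δ} ‖B̂‖² H² Δ²`. As `Δ ≤ T`, the claim follows from this and
`2‖Â‖Δ e^{−2‖Â‖T} ≤ 1`, an instance of `x ≤ eˣ`.
-/

theorem norm_exp_le_exp_norm_of_norm_one_le {𝔸 : Type*} [NormedRing 𝔸] [NormedAlgebra ℝ 𝔸]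
    [CompleteSpace 𝔸] (h1 : ‖(1 : 𝔸)‖ ≤ 1) (x : 𝔸) :
    ‖NormedSpace.exp x‖ ≤ Real.exp ‖x‖ := by
  have hpow (n : ℕ) : ‖x ^ n‖ ≤ ‖x‖ ^ n := by
    rcases n.eq_zero_or_pos with rfl | hn
    · simpa using h1
    · exact norm_pow_le' x hn
  rw [Real.exp_eq_exp_ℝ, NormedSpace.exp_eq_tsum ℝ, NormedSpace.exp_eq_tsum ℝ]
  refine (norm_tsum_le_tsum_norm (NormedSpace.norm_expSeries_summable' x)).trans ?_
  refine (NormedSpace.norm_expSeries_summable' x).tsum_le_tsum (fun n => ?_)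
    (by simpa using NormedSpace.norm_expSeries_summable' (𝕂 := ℝ) ‖x‖)
  rw [norm_smul, norm_inv, Real.norm_natCast, smul_eq_mul]
  gcongr
  exact hpow n

namespace EuclideanSpace

variable {ι : Type*} [Fintype ι]

theorem norm_toLp_eq_sqrt_sum_sq (v : ι → ℝ) : ‖WithLp.toLp 2 v‖ = √(∑ i, v i ^ 2) := by
  rw [← real_norm_sq_eq, Real.sqrt_sq (norm_nonneg _)]

theorem toLp_intervalIntegral (f : ℝ → ι → ℝ) (a b : ℝ) :
    WithLp.toLp 2 (∫ t in a..b, f t) = ∫ t in a..b, WithLp.toLp 2 (f t) := by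
  simp only [intervalIntegral, WithLp.toLp_sub]
  exact congrArg₂ _ ((EuclideanSpace.equiv ι ℝ).symm.integral_comp_comm _).symm
    ((EuclideanSpace.equiv ι ℝ).symm.integral_comp_comm _).symm

end EuclideanSpace

namespace Matrix

variable {m n 𝕜 : Type*} [Fintype m] [Fintype n] [DecidableEq n] [RCLike 𝕜]

theorem l2_opNorm_one_le : ‖(1 : Matrix n n 𝕜)‖ ≤ 1 := by
  rw [cstar_norm_def, map_one]
  exact ContinuousLinearMap.norm_id_le

theorem l2_opNorm_mulVec_toLp (A : Matrix m n 𝕜) (v : n → 𝕜) :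
    ‖WithLp.toLp 2 (A *ᵥ v)‖ ≤ ‖A‖ * ‖WithLp.toLp 2 v‖ :=
  A.l2_opNorm_mulVec (WithLp.toLp 2 v)

theorem l2_opNorm_exp_smul_le (A : Matrix n n ℝ) (s : ℝ) :
    ‖NormedSpace.exp (s • A)‖ ≤ Real.exp (|s| * ‖A‖) := by
  simpa only [norm_smul, Real.norm_eq_abs] using
    norm_exp_le_exp_norm_of_norm_one_le l2_opNorm_one_le (s • A)

theorem norm_toLp_intervalIntegral_exp_smul_mulVec_le [DecidableEq m]
    (A : Matrix m m ℝ) (B : Matrix m n ℝ) {ζ : ℝ → n → ℝ} {H a b : ℝ}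
    (hζ : ∀ t, ‖WithLp.toLp 2 (ζ t)‖ ≤ H) (hab : a ≤ b) :
    ‖WithLp.toLp 2 (∫ τ in a..b, NormedSpace.exp ((b - τ) • A) *ᵥ (B *ᵥ ζ τ))‖ ≤
      Real.exp (‖A‖ * (b - a)) * (‖B‖ * H) * (b - a) := by
  rw [EuclideanSpace.toLp_intervalIntegral, ← abs_of_nonneg (sub_nonneg.2 hab)]
  refine intervalIntegral.norm_integral_le_of_norm_le_const fun τ hτ => ?_
  rw [Set.uIoc_of_le hab] at hτ
  have hexp : ‖NormedSpace.exp ((b - τ) • A)‖ ≤ Real.exp (‖A‖ * |b - a|) := by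
    refine (l2_opNorm_exp_smul_le A _).trans (Real.exp_le_exp.2 ?_)
    rw [mul_comm, abs_of_nonneg (sub_nonneg.2 hτ.2), abs_of_nonneg (sub_nonneg.2 hab)]
    gcongr
    linarith [hτ.1]
  calc ‖WithLp.toLp 2 (NormedSpace.exp ((b - τ) • A) *ᵥ (B *ᵥ ζ τ))‖
      ≤ ‖NormedSpace.exp ((b - τ) • A)‖ * (‖B‖ * ‖WithLp.toLp 2 (ζ τ)‖) :=
        (l2_opNorm_mulVec_toLp _ _).trans <| by gcongr; exact l2_opNorm_mulVec_toLp B (ζ τ)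
    _ ≤ Real.exp (‖A‖ * |b - a|) * (‖B‖ * H) := by gcongr; exact hζ τ

end Matrix

theorem two_mul_mul_exp_div_sq_le {a c μ ν Δ T : ℝ} (ha : 0 ≤ a) (hΔ : 0 ≤ Δ) (hΔT : Δ ≤ T)
    (h : μ * Real.exp (-ν * T) ≤ (Real.exp (a * Δ) * c * Δ) ^ 2) :
    2 * μ * a * Real.exp (-(4 * a + ν) * T) / c ^ 2 ≤ Δ := by
  rcases eq_or_ne c 0 with rfl | hc
  · simpa using hΔ
  rw [div_le_iff₀ (by positivity)]
  set E := Real.exp (-(2 * a * T))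
  have hsplit : Real.exp (-(4 * a + ν) * T) = E * E * Real.exp (-ν * T) := by
    rw [← Real.exp_add, ← Real.exp_add]; ring_nf
  have hsq : (Real.exp (a * Δ) * c * Δ) ^ 2 = Real.exp (2 * a * Δ) * c ^ 2 * Δ ^ 2 := by
    rw [mul_pow, mul_pow, sq (Real.exp _), ← Real.exp_add]; ring_nf
  have hgrowth : E * Real.exp (2 * a * Δ) ≤ 1 := by
    rw [← Real.exp_add, Real.exp_le_one_iff]
    nlinarith
  have hdecay : 2 * a * Δ * E ≤ 1 := by
    have hxE : 2 * a * T * E ≤ 1 := by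
      calc 2 * a * T * E ≤ Real.exp (2 * a * T) * E := by
            gcongr; linarith [Real.add_one_le_exp (2 * a * T)]
        _ = 1 := by rw [← Real.exp_add]; simp
    exact le_trans (by gcongr) hxE
  calc 2 * μ * a * Real.exp (-(4 * a + ν) * T)
      = 2 * a * E * E * (μ * Real.exp (-ν * T)) := by rw [hsplit]; ring
    _ ≤ 2 * a * E * E * (Real.exp (2 * a * Δ) * c ^ 2 * Δ ^ 2) := by rw [← hsq]; gcongr
    _ = (2 * a * Δ * E) * (E * Real.exp (2 * a * Δ)) * (c ^ 2 * Δ) := by ring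
    _ ≤ 1 * 1 * (c ^ 2 * Δ) := by gcongr
    _ = Δ * c ^ 2 := by ring

theorem inter_event_time_lower_bound_general (m n : ℕ)
    (Ahat : Matrix (Fin m) (Fin m) ℝ)
    (Bhat : Matrix (Fin m) (Fin n) ℝ)
    (H μ ν : ℝ)
    (ζ : ℝ → Fin n → ℝ)
    (hζ : ∀ t, Real.sqrt (∑ i, ζ t i ^ 2) ≤ H)
    (tK T₀ T : ℝ) (h0 : 0 ≤ tK) (h1 : tK ≤ T₀) (h2 : T₀ ≤ T)
    (ε : Fin m → ℝ)
    (hε : ε = ∫ τ in tK..T₀, (NormedSpace.exp ((T₀ - τ) • Ahat)) *ᵥ (Bhat *ᵥ ζ τ))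
    (htrig : μ * Real.exp (-ν * T) ≤ ∑ i, ε i ^ 2) :
    2 * μ * ‖Ahat‖ * Real.exp (-(4 * ‖Ahat‖ + ν) * T) / (‖Bhat‖ ^ 2 * H ^ 2) ≤ T₀ - tK := by
  have hε_le := Ahat.norm_toLp_intervalIntegral_exp_smul_mulVec_le Bhat
    (fun t => (EuclideanSpace.norm_toLp_eq_sqrt_sum_sq (ζ t)).trans_le (hζ t)) h1
  rw [← hε] at hε_le
  have hsq : μ * Real.exp (-ν * T) ≤
      (Real.exp (‖Ahat‖ * (T₀ - tK)) * (‖Bhat‖ * H) * (T₀ - tK)) ^ 2 :=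
    calc μ * Real.exp (-ν * T) ≤ ∑ i, ε i ^ 2 := htrig
      _ = ‖WithLp.toLp 2 ε‖ ^ 2 := (EuclideanSpace.real_norm_sq_eq _).symm
      _ ≤ _ := pow_le_pow_left₀ (norm_nonneg _) hε_le 2
  rw [← mul_pow]
  exact two_mul_mul_exp_div_sq_le (norm_nonneg _) (sub_nonneg.2 h1) (by linarith) hsq

/-- Exclusion of Zeno behavior: if the sampling error
`ε(T₀) = ∫_{t_K}^{T₀} exp(Â(T₀ − τ)) B̂ ζ(τ) dτ` (with `‖ζ(t)‖ ≤ H`) has reached the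
triggering level, `‖ε(T₀)‖² ≥ μ e^{−νT}`, then the elapsed time satisfies
`T₀ − t_K ≥ 2μ‖Â‖ e^{−(4‖Â‖+ν)T} / (‖B̂‖² H²)`.
Matrix norms are the spectral (`ℓ²→ℓ²` operator) norms, vector norms Euclidean. -/
theorem inter_event_time_lower_bound (m n : ℕ)
    (Ahat : Matrix (Fin m) (Fin m) ℝ) (hA : Ahat ≠ 0)
    (Bhat : Matrix (Fin m) (Fin n) ℝ) (hB : Bhat ≠ 0)
    (H μ ν : ℝ) (hH : 0 < H) (hμ : 0 < μ) (hν : 0 < ν)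
    (ζ : ℝ → Fin n → ℝ) (hζmeas : Measurable ζ)
    (hζ : ∀ t, Real.sqrt (∑ i, ζ t i ^ 2) ≤ H)
    (tK T₀ T : ℝ) (h0 : 0 ≤ tK) (h1 : tK ≤ T₀) (h2 : T₀ ≤ T)
    (ε : Fin m → ℝ)
    (hε : ε = ∫ τ in tK..T₀, (NormedSpace.exp ((T₀ - τ) • Ahat)) *ᵥ (Bhat *ᵥ ζ τ))
    (htrig : μ * Real.exp (-ν * T) ≤ ∑ i, ε i ^ 2) :
    2 * μ * ‖Ahat‖ * Real.exp (-(4 * ‖Ahat‖ + ν) * T) / (‖Bhat‖ ^ 2 * H ^ 2) ≤ T₀ - tK :=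
  inter_event_time_lower_bound_general m n Ahat Bhat H μ ν ζ hζ tK T₀ T h0 h1 h2 ε hε htrig
end

section
/- Let α > 0, β > 0, let g : [0,∞) → ℝ be continuous, and let χ : [0,∞) → ℝ be differentiable with χ'(t) = −βχ(t) − αg(t) for all t ≥ 0. If g(t) ≤ χ(t) for all t ≥ 0 and χ(0) > 0, then χ(t) ≥ χ(0)e^{−(β+α)t} > 0 for all t ≥ 0. -/
/-- Positivity of the internal state of the dynamic event-triggering mechanism:
if `χ' = −βχ − αg` with `g ≤ χ` pointwise on `[0,∞)` and `χ(0) > 0`, then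
`χ(t) ≥ χ(0)e^{−(β+α)t} > 0` for all `t ≥ 0`. -/
theorem dynamic_trigger_state_positive (α β : ℝ) (hα : 0 < α) (hβ : 0 < β)
    (g χ : ℝ → ℝ) (hg : ContinuousOn g (Set.Ici (0 : ℝ)))
    (hχ : ∀ t, 0 ≤ t → HasDerivAt χ (-β * χ t - α * g t) t)
    (hle : ∀ t, 0 ≤ t → g t ≤ χ t) (h0 : 0 < χ 0) :
    ∀ t, 0 ≤ t → χ 0 * Real.exp (-(β + α) * t) ≤ χ t ∧ 0 < χ t := by
  set y : ℝ → ℝ := fun t => χ t * Real.exp ((β + α) * t) with hy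
  have hyd : ∀ t, 0 ≤ t →
      HasDerivAt y (α * (χ t - g t) * Real.exp ((β + α) * t)) t := by
    intro t ht
    have he : HasDerivAt (fun t => Real.exp ((β + α) * t))
        ((β + α) * Real.exp ((β + α) * t)) t := by
      have h := (Real.hasDerivAt_exp ((β + α) * t)).comp t
        ((hasDerivAt_id t).const_mul (β + α))
      have : (Real.exp ∘ fun t => (β + α) * t) = fun t => Real.exp ((β + α) * t) := rfl
      rw [this] at h
      simpa [mul_comm] using h
    have := (hχ t ht).mul he
    exact this.congr_deriv (by ring)
  have hycont : ContinuousOn y (Set.Ici 0) := by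
    apply ContinuousOn.mul
    · intro t ht
      exact ((hχ t ht).continuousAt).continuousWithinAt
    · exact (Real.continuous_exp.comp (continuous_const.mul continuous_id)).continuousOn
  have hmono : MonotoneOn y (Set.Ici 0) := by
    apply monotoneOn_of_hasDerivWithinAt_nonneg (convex_Ici 0) hycont
      (fun t ht => ((hyd t (le_of_lt (by simpa using ht))).hasDerivWithinAt))
    intro t ht
    have ht' : (0:ℝ) ≤ t := le_of_lt (by simpa using ht)
    have h1 : 0 ≤ χ t - g t := sub_nonneg.mpr (hle t ht')
    exact mul_nonneg (mul_nonneg hα.le h1) (Real.exp_pos _).le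
  intro t ht
  have hkey : χ 0 ≤ y t := by
    have := hmono (Set.self_mem_Ici) (Set.mem_Ici.mpr ht) ht
    simpa [hy] using this
  have hx : χ 0 * Real.exp (-(β + α) * t) ≤ χ t := by
    have hexp : (0:ℝ) < Real.exp ((β + α) * t) := Real.exp_pos _
    rw [neg_mul, Real.exp_neg]
    rw [mul_inv_le_iff₀ hexp]
    simpa [hy, mul_comm] using hkey
  exact ⟨hx, lt_of_lt_of_le (by positivity) hx⟩
end

section
/- Let α > 0, β > 0, let g : [0,∞) → ℝ be continuous, and let χ : [0,∞) → ℝ be differentiable with χ'(t) = −βχ(t) − αg(t) for all t ≥ 0. If g(t) ≤ χ(t) for all t ≥ 0 and χ(0) > 0, then for every T ≥ 0, ∫₀^T g(t) dt ≤ χ(0)/(β+α). -/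
/-- Integral bound from the dynamic event-triggering mechanism: if `χ' = −βχ − αg`
with `g ≤ χ` pointwise on `[0,∞)` and `χ(0) > 0`, then for every `T ≥ 0`,
`∫₀^T g(t) dt ≤ χ(0)/(β+α)`. -/
theorem dynamic_trigger_integral_bound (α β : ℝ) (hα : 0 < α) (hβ : 0 < β)
    (g χ : ℝ → ℝ) (hg : ContinuousOn g (Set.Ici (0 : ℝ)))
    (hχ : ∀ t, 0 ≤ t → HasDerivAt χ (-β * χ t - α * g t) t)
    (hle : ∀ t, 0 ≤ t → g t ≤ χ t) (h0 : 0 < χ 0) :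
    ∀ T, 0 ≤ T → (∫ t in (0 : ℝ)..T, g t) ≤ χ 0 / (β + α) := by
  intro T hT
  set c := β + α with hc
  have hcpos : 0 < c := by positivity
  have huIcc : Set.uIcc (0:ℝ) T = Set.Icc 0 T := Set.uIcc_of_le hT
  have hsub : Set.Icc (0:ℝ) T ⊆ Set.Ici 0 := fun x hx => hx.1
  have hχc : ContinuousOn χ (Set.Ici 0) := fun t ht =>
    (hχ t ht).continuousAt.continuousWithinAt
  have hgI : IntervalIntegrable g MeasureTheory.volume 0 T :=
    (hg.mono (by rw [huIcc]; exact hsub)).intervalIntegrable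
  have hχI : IntervalIntegrable χ MeasureTheory.volume 0 T :=
    (hχc.mono (by rw [huIcc]; exact hsub)).intervalIntegrable
  set I := ∫ t in (0:ℝ)..T, g t with hI
  set J := ∫ t in (0:ℝ)..T, χ t with hJ
  -- FTC for χ
  have hderivI : IntervalIntegrable (fun t => -β * χ t - α * g t)
      MeasureTheory.volume 0 T := (hχI.const_mul (-β)).sub (hgI.const_mul α)
  have hFTC : ∫ t in (0:ℝ)..T, (-β * χ t - α * g t) = χ T - χ 0 :=
    intervalIntegral.integral_eq_sub_of_hasDerivAt
      (fun t ht => hχ t (by rw [huIcc] at ht; exact ht.1)) hderivI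
  have hsplit : ∫ t in (0:ℝ)..T, (-β * χ t - α * g t) = -β * J - α * I := by
    rw [intervalIntegral.integral_sub (hχI.const_mul (-β)) (hgI.const_mul α),
      intervalIntegral.integral_const_mul, intervalIntegral.integral_const_mul]
  have hkey : -β * J - α * I = χ T - χ 0 := by rw [← hsplit]; exact hFTC
  -- positivity of χ T via integrating factor
  set y : ℝ → ℝ := fun t => χ t * Real.exp (c * t) with hy
  have hyderiv : ∀ t ∈ Set.uIcc (0:ℝ) T,
      HasDerivAt y (Real.exp (c * t) * (α * (χ t - g t))) t := by
    intro t ht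
    rw [huIcc] at ht
    have hexp : HasDerivAt (fun t => Real.exp (c * t)) (Real.exp (c * t) * c) t := by
      have := ((hasDerivAt_id t).const_mul c).exp
      simpa [mul_comm] using this
    have : HasDerivAt y ((-β * χ t - α * g t) * Real.exp (c * t) + χ t * (Real.exp (c * t) * c)) t :=
      (hχ t ht.1).mul hexp
    convert this using 1
    rw [hc]; ring
  have hycont : ContinuousOn (fun t => Real.exp (c * t) * (α * (χ t - g t)))
      (Set.uIcc (0:ℝ) T) := by
    rw [huIcc]
    exact ((Real.continuous_exp.comp (continuous_const.mul continuous_id)).continuousOn).mul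
      (continuousOn_const.mul ((hχc.mono hsub).sub (hg.mono hsub)))
  have hyFTC : ∫ t in (0:ℝ)..T, Real.exp (c * t) * (α * (χ t - g t)) = y T - y 0 :=
    intervalIntegral.integral_eq_sub_of_hasDerivAt hyderiv hycont.intervalIntegrable
  have hynn : 0 ≤ ∫ t in (0:ℝ)..T, Real.exp (c * t) * (α * (χ t - g t)) := by
    apply intervalIntegral.integral_nonneg hT
    intro u hu
    have h1 := hle u hu.1
    exact mul_nonneg (Real.exp_pos (c * u)).le (mul_nonneg hα.le (by linarith))
  have hy0 : y 0 = χ 0 := by simp [hy]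
  have hyT : 0 < y T := by
    have : y 0 ≤ y T := by linarith [hyFTC ▸ hynn]
    rw [hy0] at this; linarith
  have hχT : 0 < χ T := by
    have he := Real.exp_pos (c * T)
    simp only [hy] at hyT
    by_contra h
    push_neg at h
    nlinarith
  -- I ≤ J
  have hIJ : I ≤ J :=
    intervalIntegral.integral_mono_on hT hgI hχI (fun t ht => hle t ht.1)
  have hβIJ : β * I ≤ β * J := mul_le_mul_of_nonneg_left hIJ hβ.le
  rw [le_div_iff₀ hcpos]
  nlinarith
end

section
/- Let Ω₁ (p×p) and Ω₂ (q×q) be real symmetric positive semidefinite matrices, η ≥ 0, α > 0, β > 0, and set γ² = max(λmax(Ω₁), λmax(Ω₂) + η²). Let ŷ : [0,∞) → ℝᵖ, û : [0,∞) → ℝ^q, ε : [0,∞) → ℝ^k, d : [0,∞) → ℝᵖ be measurable with g(t) := ‖ε(t)‖² − ŷ(t)ᵀΩ₁ŷ(t) − û(t)ᵀΩ₂û(t) continuous, and let χ : [0,∞) → ℝ be differentiable with χ(0) > 0 and χ'(t) = −βχ(t) − αg(t). Suppose (i) g(t) ≤ χ(t) for all t ≥ 0 (the dynamic event-triggering condition),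 and (ii) ∫₀^∞‖d‖² ≤ η²∫₀^∞‖û‖². Then ∫₀^∞(‖ε‖² + ‖d‖²) ≤ γ²∫₀^∞(‖ŷ‖² + ‖û‖²) + χ(0)/(α+β). (Thus the dynamic event-triggering mechanism yields the same finite L₂-gain bound γ as the static one.) -/
open Matrix MeasureTheory
open scoped ENNReal

lemma vecMul_eq_star_mulVec {n : Type*} [Fintype n] (U : Matrix n n ℝ) (x : n → ℝ) :
    x ᵥ* U = star U *ᵥ x := by
  ext i
  simp [vecMul, mulVec, dotProduct, conjTranspose_apply, mul_comm]

lemma quadform_eq_sum {n : Type*} [Fintype n] [DecidableEq n]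
    (A : Matrix n n ℝ) (hA : A.IsHermitian) (x : n → ℝ) :
    x ⬝ᵥ A *ᵥ x
      = ∑ i, hA.eigenvalues i * ((star (hA.eigenvectorUnitary : Matrix n n ℝ)) *ᵥ x) i ^ 2 := by
  set U : Matrix n n ℝ := (hA.eigenvectorUnitary : Matrix n n ℝ) with hU
  set y : n → ℝ := star U *ᵥ x with hy
  have h1 : x ᵥ* U = y := by rw [hy, vecMul_eq_star_mulVec]
  conv_lhs => rw [hA.spectral_theorem, Unitary.conjStarAlgAut_apply]
  rw [← hU, ← mulVec_mulVec, ← mulVec_mulVec, dotProduct_mulVec x U, ← hy, h1]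
  simp only [dotProduct, mulVec_diagonal]
  refine Finset.sum_congr rfl fun i _ => ?_
  simp [Function.comp]
  ring

lemma quadform_le_iSup_eigenvalues {n : Type*} [Fintype n] [DecidableEq n] [Nonempty n]
    (A : Matrix n n ℝ) (hA : A.IsHermitian) (x : n → ℝ) :
    x ⬝ᵥ A *ᵥ x ≤ (⨆ i, hA.eigenvalues i) * ∑ i, x i ^ 2 := by
  set U : Matrix n n ℝ := (hA.eigenvectorUnitary : Matrix n n ℝ) with hU
  set y : n → ℝ := star U *ᵥ x with hy
  have hnorm : ∑ i, y i ^ 2 = ∑ i, x i ^ 2 := by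
    have h2 : y ᵥ* star U = x := by
      rw [vecMul_eq_star_mulVec, star_star, hy, mulVec_mulVec,
        (Matrix.mem_unitaryGroup_iff).mp hA.eigenvectorUnitary.2, one_mulVec]
    have h3 : y ⬝ᵥ y = x ⬝ᵥ x := by
      conv_lhs => rw [hy, dotProduct_mulVec y (star U) x, h2]
    simpa [dotProduct, pow_two] using h3
  rw [quadform_eq_sum A hA x, ← hy, ← hnorm, Finset.mul_sum]
  refine Finset.sum_le_sum fun i _ => ?_
  exact mul_le_mul_of_nonneg_right (le_ciSup (Set.Finite.bddAbove (Set.finite_range _)) i)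
    (sq_nonneg _)

lemma chi_pos (χ g : ℝ → ℝ) (α β : ℝ) (hα : 0 < α) (hβ : 0 < β) (hχ0 : 0 < χ 0)
    (hχ : ∀ t, 0 ≤ t → HasDerivAt χ (-β * χ t - α * g t) t)
    (htrig : ∀ t, 0 ≤ t → g t ≤ χ t) :
    ∀ t, 0 ≤ t → 0 < χ t := by
  set φ : ℝ → ℝ := fun t => χ t * Real.exp ((α + β) * t) with hφ
  have hD : ∀ t, 0 ≤ t → HasDerivAt φ
      ((-β * χ t - α * g t) * Real.exp ((α + β) * t)
        + χ t * (Real.exp ((α + β) * t) * (α + β))) t := by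
    intro t ht
    have h1 : HasDerivAt (fun s => Real.exp ((α + β) * s))
        (Real.exp ((α + β) * t) * (α + β)) t := by
      simpa using (((hasDerivAt_id t).const_mul (α + β)).exp)
    exact (hχ t ht).mul h1
  have hmono : MonotoneOn φ (Set.Ici (0 : ℝ)) := by
    apply monotoneOn_of_deriv_nonneg (convex_Ici 0)
    · intro t ht
      exact (hD t ht).continuousAt.continuousWithinAt
    · intro t ht
      rw [interior_Ici] at ht
      exact (hD t (le_of_lt ht)).differentiableAt.differentiableWithinAt
    · intro t ht
      rw [interior_Ici] at ht
      rw [(hD t ht.le).deriv]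
      have hg := htrig t ht.le
      have heq : (-β * χ t - α * g t) * Real.exp ((α + β) * t)
          + χ t * (Real.exp ((α + β) * t) * (α + β))
          = (α * (χ t - g t)) * Real.exp ((α + β) * t) := by ring
      rw [heq]
      have h2 : 0 ≤ α * (χ t - g t) := by nlinarith
      exact mul_nonneg h2 (Real.exp_pos _).le
  intro t ht
  have h0 : φ 0 ≤ φ t := hmono Set.self_mem_Ici ht ht
  have hφ0 : φ 0 = χ 0 := by simp [hφ]
  have h2 : 0 < χ t * Real.exp ((α + β) * t) := lt_of_lt_of_le (hφ0 ▸ hχ0) h0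
  rcases mul_pos_iff.mp h2 with ⟨h, _⟩ | ⟨_, h⟩
  · exact h
  · linarith [Real.exp_pos ((α + β) * t)]

lemma integral_g_le (χ g : ℝ → ℝ) (α β : ℝ) (hα : 0 < α) (hβ : 0 < β) (hχ0 : 0 < χ 0)
    (hχ : ∀ t, 0 ≤ t → HasDerivAt χ (-β * χ t - α * g t) t)
    (htrig : ∀ t, 0 ≤ t → g t ≤ χ t)
    (hgcont : ContinuousOn g (Set.Ici (0 : ℝ)))
    (T : ℝ) (hT : 0 ≤ T) :
    ∫ t in (0:ℝ)..T, g t ≤ χ 0 / (α + β) := by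
  have hχcont : ContinuousOn χ (Set.Ici (0 : ℝ)) := fun t ht =>
    (hχ t ht).continuousAt.continuousWithinAt
  have hsub : Set.Icc (0:ℝ) T ⊆ Set.Ici (0:ℝ) := fun x hx => hx.1
  have hgint : IntervalIntegrable g MeasureTheory.volume 0 T :=
    (hgcont.mono hsub).intervalIntegrable_of_Icc hT
  have hχint : IntervalIntegrable χ MeasureTheory.volume 0 T :=
    (hχcont.mono hsub).intervalIntegrable_of_Icc hT
  have hderint : IntervalIntegrable (fun t => -β * χ t - α * g t) MeasureTheory.volume 0 T :=
    (hχint.const_mul _).sub (hgint.const_mul _)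
  have hFTC : ∫ t in (0:ℝ)..T, (-β * χ t - α * g t) = χ T - χ 0 := by
    refine intervalIntegral.integral_eq_sub_of_hasDerivAt (fun t ht => ?_) hderint
    rw [Set.uIcc_of_le hT] at ht
    exact hχ t ht.1
  have hsplit : ∫ t in (0:ℝ)..T, (-β * χ t - α * g t)
      = -β * (∫ t in (0:ℝ)..T, χ t) - α * (∫ t in (0:ℝ)..T, g t) := by
    rw [intervalIntegral.integral_sub (hχint.const_mul _) (hgint.const_mul _),
      intervalIntegral.integral_const_mul, intervalIntegral.integral_const_mul]
  have hgχ : ∫ t in (0:ℝ)..T, g t ≤ ∫ t in (0:ℝ)..T, χ t := by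
    apply intervalIntegral.integral_mono_on hT hgint hχint
    intro t ht
    exact htrig t ht.1
  have hχT : 0 < χ T := chi_pos χ g α β hα hβ hχ0 hχ htrig T hT
  have h3 : χ T - χ 0 = -β * (∫ t in (0:ℝ)..T, χ t) - α * (∫ t in (0:ℝ)..T, g t) := by
    rw [← hFTC, hsplit]
  rw [le_div_iff₀ (by positivity)]
  nlinarith [mul_le_mul_of_nonneg_left hgχ hβ.le, hχT, h3]

lemma lintegral_Ici_eq_iSup (F : ℝ → ℝ≥0∞) (hFm : Measurable F) :
    ∫⁻ t in Set.Ici (0:ℝ), F t = ⨆ n : ℕ, ∫⁻ t in Set.Icc (0:ℝ) (n:ℝ), F t := by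
  rw [← lintegral_indicator measurableSet_Ici]
  have heq : (Set.Ici (0:ℝ)).indicator F
      = fun x => ⨆ n : ℕ, (Set.Icc (0:ℝ) (n:ℝ)).indicator F x := by
    funext x
    rcases le_or_gt 0 x with hx | hx
    · rw [Set.indicator_of_mem (Set.mem_Ici.mpr hx)]
      apply le_antisymm
      · exact le_iSup_of_le ⌈x⌉₊
          (le_of_eq (Set.indicator_of_mem (Set.mem_Icc.mpr ⟨hx, Nat.le_ceil x⟩) F).symm)
      · exact iSup_le fun n => Set.indicator_le_self _ _ x
    · simp [Set.indicator_of_notMem (by simpa using hx : x ∉ Set.Ici (0:ℝ)),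
        Set.indicator_of_notMem
          (show x ∉ Set.Icc (0:ℝ) _ from fun hc => absurd hc.1 (not_le.mpr hx))]
  rw [heq, lintegral_iSup]
  · simp_rw [lintegral_indicator measurableSet_Icc]
  · exact fun n => hFm.indicator measurableSet_Icc
  · intro m n hmn
    apply Set.indicator_le_indicator_of_subset
    · exact Set.Icc_subset_Icc_right (by exact_mod_cast hmn)
    · exact fun x => zero_le

/-- The dynamic event-triggering mechanism yields the same finite `L₂`-gain bound `γ`
as the static one: with `g(t) = ‖ε(t)‖² − ŷ(t)ᵀΩ₁ŷ(t) − û(t)ᵀΩ₂û(t)`,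
`χ' = −βχ − αg`, `χ(0) > 0`, the triggering condition `g ≤ χ`, and
`∫₀^∞‖d‖² ≤ η²∫₀^∞‖û‖²`, we have
`∫₀^∞ (‖ε‖² + ‖d‖²) ≤ γ² ∫₀^∞ (‖ŷ‖² + ‖û‖²) + χ(0)/(α+β)`,
where `γ² = max (λmax Ω₁) (λmax Ω₂ + η²)`. (Here `yhat = ŷ`, `uhat = û`.) -/
theorem dynamic_trigger_finite_L2_gain (p q k : ℕ) (hp : 0 < p) (hq : 0 < q)
    (Ω₁ : Matrix (Fin p) (Fin p) ℝ) (Ω₂ : Matrix (Fin q) (Fin q) ℝ)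
    (hΩ₁ : Ω₁.PosSemidef) (hΩ₂ : Ω₂.PosSemidef)
    (η α β : ℝ) (hη : 0 ≤ η) (hα : 0 < α) (hβ : 0 < β) (γsq : ℝ)
    (hγsq : γsq = max (⨆ i, hΩ₁.1.eigenvalues i) ((⨆ i, hΩ₂.1.eigenvalues i) + η ^ 2))
    (yhat : ℝ → Fin p → ℝ) (uhat : ℝ → Fin q → ℝ) (ε : ℝ → Fin k → ℝ) (d : ℝ → Fin p → ℝ)
    (hyhat : Measurable yhat) (huhat : Measurable uhat) (hε : Measurable ε) (hd : Measurable d)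
    (g : ℝ → ℝ)
    (hgdef : ∀ t, g t = (∑ i, ε t i ^ 2) - yhat t ⬝ᵥ Ω₁ *ᵥ yhat t - uhat t ⬝ᵥ Ω₂ *ᵥ uhat t)
    (hgcont : ContinuousOn g (Set.Ici (0 : ℝ)))
    (χ : ℝ → ℝ) (hχ0 : 0 < χ 0)
    (hχ : ∀ t, 0 ≤ t → HasDerivAt χ (-β * χ t - α * g t) t)
    (htrig : ∀ t, 0 ≤ t → g t ≤ χ t)
    (hunc : ∫⁻ t in Set.Ici (0 : ℝ), ENNReal.ofReal (∑ i, d t i ^ 2) ≤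
      ENNReal.ofReal (η ^ 2) * ∫⁻ t in Set.Ici (0 : ℝ), ENNReal.ofReal (∑ i, uhat t i ^ 2)) :
    ∫⁻ t in Set.Ici (0 : ℝ), ENNReal.ofReal ((∑ i, ε t i ^ 2) + ∑ i, d t i ^ 2) ≤
      ENNReal.ofReal γsq *
        (∫⁻ t in Set.Ici (0 : ℝ), ENNReal.ofReal ((∑ i, yhat t i ^ 2) + ∑ i, uhat t i ^ 2)) +
      ENNReal.ofReal (χ 0 / (α + β)) := by
  haveI : Nonempty (Fin p) := Fin.pos_iff_nonempty.mp hp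
  haveI : Nonempty (Fin q) := Fin.pos_iff_nonempty.mp hq
  set c : ℝ := χ 0 / (α + β) with hc
  have hcpos : 0 < c := div_pos hχ0 (by linarith)
  set lam₁ : ℝ := ⨆ i, hΩ₁.1.eigenvalues i with hlam₁def
  set lam₂ : ℝ := ⨆ i, hΩ₂.1.eigenvalues i with hlam₂def
  have hlam₁ : 0 ≤ lam₁ :=
    le_trans (hΩ₁.eigenvalues_nonneg (Classical.arbitrary _))
      (le_ciSup (Set.Finite.bddAbove (Set.finite_range _)) _)
  have hlam₂ : 0 ≤ lam₂ :=
    le_trans (hΩ₂.eigenvalues_nonneg (Classical.arbitrary _))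
      (le_ciSup (Set.Finite.bddAbove (Set.finite_range _)) _)
  -- measurability of the scalar functions
  have mEy : Measurable (fun t => ∑ i, yhat t i ^ 2) :=
    Finset.measurable_sum _ fun i _ => ((measurable_pi_apply i).comp hyhat).pow_const 2
  have mEu : Measurable (fun t => ∑ i, uhat t i ^ 2) :=
    Finset.measurable_sum _ fun i _ => ((measurable_pi_apply i).comp huhat).pow_const 2
  have mEε : Measurable (fun t => ∑ i, ε t i ^ 2) :=
    Finset.measurable_sum _ fun i _ => ((measurable_pi_apply i).comp hε).pow_const 2
  have mEd : Measurable (fun t => ∑ i, d t i ^ 2) :=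
    Finset.measurable_sum _ fun i _ => ((measurable_pi_apply i).comp hd).pow_const 2
  have mq₁ : Measurable (fun t => yhat t ⬝ᵥ Ω₁ *ᵥ yhat t) := by
    have he : (fun t => yhat t ⬝ᵥ Ω₁ *ᵥ yhat t)
        = fun t => ∑ i, yhat t i * ∑ j, Ω₁ i j * yhat t j := by
      funext t; simp [dotProduct, mulVec]
    rw [he]
    exact Finset.measurable_sum _ fun i _ => ((measurable_pi_apply i).comp hyhat).mul
      (Finset.measurable_sum _ fun j _ =>
        measurable_const.mul ((measurable_pi_apply j).comp hyhat))
  have mq₂ : Measurable (fun t => uhat t ⬝ᵥ Ω₂ *ᵥ uhat t) := by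
    have he : (fun t => uhat t ⬝ᵥ Ω₂ *ᵥ uhat t)
        = fun t => ∑ i, uhat t i * ∑ j, Ω₂ i j * uhat t j := by
      funext t; simp [dotProduct, mulVec]
    rw [he]
    exact Finset.measurable_sum _ fun i _ => ((measurable_pi_apply i).comp huhat).mul
      (Finset.measurable_sum _ fun j _ =>
        measurable_const.mul ((measurable_pi_apply j).comp huhat))
  have mg : Measurable g := by
    have he : g = fun t =>
        (∑ i, ε t i ^ 2) - yhat t ⬝ᵥ Ω₁ *ᵥ yhat t - uhat t ⬝ᵥ Ω₂ *ᵥ uhat t := funext hgdef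
    rw [he]
    exact (mEε.sub mq₁).sub mq₂
  have mgp : Measurable (fun t => max (g t) 0) := mg.max measurable_const
  have mgm : Measurable (fun t => max (-g t) 0) := mg.neg.max measurable_const
  -- nonnegativity
  have hEy0 : ∀ t, (0:ℝ) ≤ ∑ i, yhat t i ^ 2 := fun t => Finset.sum_nonneg fun i _ => sq_nonneg _
  have hEu0 : ∀ t, (0:ℝ) ≤ ∑ i, uhat t i ^ 2 := fun t => Finset.sum_nonneg fun i _ => sq_nonneg _
  have hEε0 : ∀ t, (0:ℝ) ≤ ∑ i, ε t i ^ 2 := fun t => Finset.sum_nonneg fun i _ => sq_nonneg _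
  have hEd0 : ∀ t, (0:ℝ) ≤ ∑ i, d t i ^ 2 := fun t => Finset.sum_nonneg fun i _ => sq_nonneg _
  -- pointwise quadratic form bounds
  have hq₁0 : ∀ t, 0 ≤ yhat t ⬝ᵥ Ω₁ *ᵥ yhat t := fun t => by simpa using hΩ₁.dotProduct_mulVec_nonneg (yhat t)
  have hq₂0 : ∀ t, 0 ≤ uhat t ⬝ᵥ Ω₂ *ᵥ uhat t := fun t => by simpa using hΩ₂.dotProduct_mulVec_nonneg (uhat t)
  have hq₁le : ∀ t, yhat t ⬝ᵥ Ω₁ *ᵥ yhat t ≤ lam₁ * ∑ i, yhat t i ^ 2 := fun t =>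
    quadform_le_iSup_eigenvalues Ω₁ hΩ₁.1 (yhat t)
  have hq₂le : ∀ t, uhat t ⬝ᵥ Ω₂ *ᵥ uhat t ≤ lam₂ * ∑ i, uhat t i ^ 2 := fun t =>
    quadform_le_iSup_eigenvalues Ω₂ hΩ₂.1 (uhat t)
  have hgpm : ∀ t, g t + max (-g t) 0 = max (g t) 0 := by
    intro t
    rcases le_total (g t) 0 with h | h
    · rw [max_eq_left (neg_nonneg.mpr h), max_eq_right h]; ring
    · rw [max_eq_right (neg_nonpos.mpr h), max_eq_left h]; ring
  -- abbreviations for the lintegrals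
  set A : ℝ≥0∞ := ∫⁻ t in Set.Ici (0:ℝ), ENNReal.ofReal (∑ i, yhat t i ^ 2) with hA
  set B : ℝ≥0∞ := ∫⁻ t in Set.Ici (0:ℝ), ENNReal.ofReal (∑ i, uhat t i ^ 2) with hB
  set Lε : ℝ≥0∞ := ∫⁻ t in Set.Ici (0:ℝ), ENNReal.ofReal (∑ i, ε t i ^ 2) with hLε
  set Ld : ℝ≥0∞ := ∫⁻ t in Set.Ici (0:ℝ), ENNReal.ofReal (∑ i, d t i ^ 2) with hLd
  set Gp : ℝ≥0∞ := ∫⁻ t in Set.Ici (0:ℝ), ENNReal.ofReal (max (g t) 0) with hGp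
  set Gm : ℝ≥0∞ := ∫⁻ t in Set.Ici (0:ℝ), ENNReal.ofReal (max (-g t) 0) with hGm
  set K : ℝ≥0∞ := ENNReal.ofReal lam₁ * A + ENNReal.ofReal lam₂ * B with hK
  -- the integral of R = lam₁ Ey + lam₂ Eu
  have hR : ∫⁻ t in Set.Ici (0:ℝ),
      ENNReal.ofReal (lam₁ * (∑ i, yhat t i ^ 2) + lam₂ * ∑ i, uhat t i ^ 2) = K := by
    rw [hK, hA, hB]
    simp_rw [ENNReal.ofReal_add (mul_nonneg hlam₁ (hEy0 _)) (mul_nonneg hlam₂ (hEu0 _)),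
      ENNReal.ofReal_mul hlam₁, ENNReal.ofReal_mul hlam₂]
    rw [lintegral_add_left ((mEy.ennreal_ofReal).const_mul _),
      lintegral_const_mul _ (mEy.ennreal_ofReal),
      lintegral_const_mul _ (mEu.ennreal_ofReal)]
  -- h1 : Lε + Gm ≤ K + Gp
  have h1 : Lε + Gm ≤ K + Gp := by
    have e1 : ∫⁻ t in Set.Ici (0:ℝ), ENNReal.ofReal ((∑ i, ε t i ^ 2) + max (-g t) 0)
        = Lε + Gm := by
      simp_rw [ENNReal.ofReal_add (hEε0 _) (le_max_right _ _)]
      rw [lintegral_add_left (mEε.ennreal_ofReal)]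
    have e2 : ∫⁻ t in Set.Ici (0:ℝ), ENNReal.ofReal
        ((lam₁ * (∑ i, yhat t i ^ 2) + lam₂ * ∑ i, uhat t i ^ 2) + max (g t) 0) = K + Gp := by
      simp_rw [ENNReal.ofReal_add
        (add_nonneg (mul_nonneg hlam₁ (hEy0 _)) (mul_nonneg hlam₂ (hEu0 _))) (le_max_right _ _)]
      rw [lintegral_add_left]
      · rw [hR]
      · exact ((mEy.const_mul lam₁).add (mEu.const_mul lam₂)).ennreal_ofReal
    rw [← e1, ← e2]
    refine setLIntegral_mono
      ((((mEy.const_mul lam₁).add (mEu.const_mul lam₂)).add mgp).ennreal_ofReal)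
      fun t ht => ?_
    apply ENNReal.ofReal_le_ofReal
    have h1 := hq₁le t
    have h2 := hq₂le t
    have h3 := hgdef t
    have h4 := hgpm t
    linarith
  -- h3 : Gm ≤ K
  have h3 : Gm ≤ K := by
    rw [← hR, hGm]
    refine setLIntegral_mono
      (((mEy.const_mul lam₁).add (mEu.const_mul lam₂)).ennreal_ofReal)
      fun t ht => ?_
    apply ENNReal.ofReal_le_ofReal
    have h1 := hq₁le t
    have h2 := hq₂le t
    have h3 := hgdef t
    have h5 := hEε0 t
    have hm1 := mul_nonneg hlam₁ (hEy0 t)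
    have hm2 := mul_nonneg hlam₂ (hEu0 t)
    rcases le_total (-g t) 0 with h | h
    · rw [max_eq_right h]
      linarith
    · rw [max_eq_left h]
      linarith
  -- h2 : Gp ≤ Gm + ofReal c
  have h2 : Gp ≤ Gm + ENNReal.ofReal c := by
    rw [hGp, lintegral_Ici_eq_iSup _ (mgp.ennreal_ofReal)]
    refine iSup_le fun n => ?_
    have hsub : Set.Icc (0:ℝ) (n:ℝ) ⊆ Set.Ici (0:ℝ) := fun x hx => hx.1
    have hgpc : ContinuousOn (fun t => max (g t) 0) (Set.Icc (0:ℝ) (n:ℝ)) :=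
      (hgcont.mono hsub).sup continuousOn_const
    have hgmc : ContinuousOn (fun t => max (-g t) 0) (Set.Icc (0:ℝ) (n:ℝ)) :=
      (hgcont.mono hsub).neg.sup continuousOn_const
    have hgpint : IntegrableOn (fun t => max (g t) 0) (Set.Icc (0:ℝ) (n:ℝ)) :=
      hgpc.integrableOn_Icc
    have hgmint : IntegrableOn (fun t => max (-g t) 0) (Set.Icc (0:ℝ) (n:ℝ)) :=
      hgmc.integrableOn_Icc
    have hIg : ∫ t in Set.Icc (0:ℝ) (n:ℝ), g t ≤ c := by
      rw [hc, integral_Icc_eq_integral_Ioc, ← intervalIntegral.integral_of_le n.cast_nonneg]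
      exact integral_g_le χ g α β hα hβ hχ0 hχ htrig hgcont n n.cast_nonneg
    have hdiff : (∫ t in Set.Icc (0:ℝ) (n:ℝ), max (g t) 0)
        - ∫ t in Set.Icc (0:ℝ) (n:ℝ), max (-g t) 0 = ∫ t in Set.Icc (0:ℝ) (n:ℝ), g t := by
      rw [← integral_sub hgpint hgmint]
      apply integral_congr_ae
      filter_upwards with t
      have := hgpm t
      linarith
    calc ∫⁻ t in Set.Icc (0:ℝ) (n:ℝ), ENNReal.ofReal (max (g t) 0)
        = ENNReal.ofReal (∫ t in Set.Icc (0:ℝ) (n:ℝ), max (g t) 0) :=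
          (ofReal_integral_eq_lintegral_ofReal hgpint
            (Filter.Eventually.of_forall fun t => le_max_right _ _)).symm
      _ ≤ ENNReal.ofReal ((∫ t in Set.Icc (0:ℝ) (n:ℝ), max (-g t) 0) + c) :=
          ENNReal.ofReal_le_ofReal (by linarith)
      _ = ENNReal.ofReal (∫ t in Set.Icc (0:ℝ) (n:ℝ), max (-g t) 0) + ENNReal.ofReal c :=
          ENNReal.ofReal_add (integral_nonneg fun t => le_max_right _ _) hcpos.le
      _ = (∫⁻ t in Set.Icc (0:ℝ) (n:ℝ), ENNReal.ofReal (max (-g t) 0)) + ENNReal.ofReal c := by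
          rw [ofReal_integral_eq_lintegral_ofReal hgmint
            (Filter.Eventually.of_forall fun t => le_max_right _ _)]
      _ ≤ Gm + ENNReal.ofReal c := by
          gcongr
          exact lintegral_mono_set (fun x hx => hx.1)
  -- cancellation: Lε ≤ K + ofReal c
  have hLεK : Lε ≤ K + ENNReal.ofReal c := by
    by_cases hKtop : K = ⊤
    · simp [hKtop]
    · have hGmfin : Gm ≠ ⊤ := fun hcon => hKtop (top_le_iff.mp (hcon ▸ h3))
      have hcomb : Lε + Gm ≤ (K + ENNReal.ofReal c) + Gm := by
        calc Lε + Gm ≤ K + Gp := h1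
          _ ≤ K + (Gm + ENNReal.ofReal c) := add_le_add_right h2 K
          _ = (K + ENNReal.ofReal c) + Gm := by ring
      exact (ENNReal.add_le_add_iff_right hGmfin).mp hcomb
  -- split LHS and RHS
  have eL : ∫⁻ t in Set.Ici (0:ℝ), ENNReal.ofReal ((∑ i, ε t i ^ 2) + ∑ i, d t i ^ 2)
      = Lε + Ld := by
    simp_rw [ENNReal.ofReal_add (hEε0 _) (hEd0 _)]
    rw [lintegral_add_left (mEε.ennreal_ofReal)]
  have eR : ∫⁻ t in Set.Ici (0:ℝ), ENNReal.ofReal ((∑ i, yhat t i ^ 2) + ∑ i, uhat t i ^ 2)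
      = A + B := by
    simp_rw [ENNReal.ofReal_add (hEy0 _) (hEu0 _)]
    rw [lintegral_add_left (mEy.ennreal_ofReal)]
  rw [eL, eR]
  have hγ₁ : ENNReal.ofReal lam₁ ≤ ENNReal.ofReal γsq :=
    ENNReal.ofReal_le_ofReal (hγsq ▸ le_max_left _ _)
  have hγ₂ : ENNReal.ofReal (lam₂ + η ^ 2) ≤ ENNReal.ofReal γsq :=
    ENNReal.ofReal_le_ofReal (hγsq ▸ le_max_right _ _)
  calc Lε + Ld ≤ (K + ENNReal.ofReal c) + ENNReal.ofReal (η ^ 2) * B := add_le_add hLεK hunc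
    _ = (ENNReal.ofReal lam₁ * A + ENNReal.ofReal (lam₂ + η ^ 2) * B) + ENNReal.ofReal c := by
        rw [hK, ENNReal.ofReal_add hlam₂ (sq_nonneg η), add_mul]
        ring
    _ ≤ (ENNReal.ofReal γsq * A + ENNReal.ofReal γsq * B) + ENNReal.ofReal c := by
        gcongr
    _ = ENNReal.ofReal γsq * (A + B) + ENNReal.ofReal c := by rw [mul_add]
end
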